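/- Let f be a probability density symmetric about μ ≥ 0 (f(x) = f(2μ − x)) with CDF F that is log-concave on (−∞, μ]. If A_F(0) ≥ 1/2 (equivalently F(0) ≤ 1/2), then the selective accuracy A_F(τ) = (1 − F(τ))/(1 − F(τ) + F(−τ)) is monotonically nondecreasing on [0, ∞). -/

import Mathlib

/-!
`A_F'(τ)` has the sign of `f(-τ) (1 - F τ) - f τ F(-τ)`. Since `f` is symmetric about `μ`,
`F x + F (2μ - x)` is constant, and `F μ ≤ 1/2`: otherwise `F` stays bounded away from `0` on
`(-∞, μ]`, where log-concavity then bounds `f = (f/F) F` below by a positive constant, so `F`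
could not stay in `(0, 1)`. For `τ ≥ 0` the point `s = min τ (2μ - τ)` satisfies
`-τ ≤ s ≤ μ`, `f s = f τ` and `F s ≤ 1 - F τ`, and log-concavity between `-τ` and `s` gives
`f τ F(-τ) ≤ f(-τ) F s ≤ f(-τ) (1 - F τ)`.
-/

open Set

noncomputable def selectiveAccuracy (F : ℝ → ℝ) (τ : ℝ) : ℝ :=
  (1 - F τ) / (1 - F τ + F (-τ))

section

variable {f F : ℝ → ℝ} {μ : ℝ}

theorem hasDerivAt_selectiveAccuracy (hF : ∀ x, HasDerivAt F (f x) x) {τ : ℝ}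
    (hD : 1 - F τ + F (-τ) ≠ 0) :
    HasDerivAt (selectiveAccuracy F)
      ((f (-τ) * (1 - F τ) - f τ * F (-τ)) / (1 - F τ + F (-τ)) ^ 2) τ := by
  have hnum : HasDerivAt (fun τ => 1 - F τ) (-f τ) τ := (hF τ).const_sub 1
  have hrefl : HasDerivAt (fun τ => F (-τ)) (-f (-τ)) τ := by
    simpa using (hF (0 - τ)).comp_const_sub 0 τ
  have hden : HasDerivAt (fun τ => 1 - F τ + F (-τ)) (-f τ + -f (-τ)) τ := hnum.add hrefl
  exact (hnum.div hden hD).congr_deriv (by ring)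

theorem add_apply_two_mul_sub_eq (hF : ∀ x, HasDerivAt F (f x) x)
    (hsym : ∀ x, f x = f (2 * μ - x)) (x : ℝ) :
    F x + F (2 * μ - x) = 2 * F μ := by
  have hderiv : ∀ y, HasDerivAt (fun y => F y + F (2 * μ - y)) 0 y := fun y => by
    refine ((hF y).add ((hF (2 * μ - y)).comp_const_sub (2 * μ) y)).congr_deriv ?_
    rw [← hsym, add_neg_cancel]
  have := is_const_of_deriv_eq_zero (fun y => (hderiv y).differentiableAt)
    (fun y => (hderiv y).deriv) x μ
  rwa [show 2 * μ - μ = μ by ring, ← two_mul] at this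

theorem mul_sub_le_sub_of_le_hasDerivAt_Iic (hF : ∀ x, HasDerivAt F (f x) x) {δ : ℝ}
    (hδ : ∀ x ≤ μ, δ ≤ f x) {x : ℝ} (hx : x ≤ μ) :
    δ * (μ - x) ≤ F μ - F x := by
  have hFd : Differentiable ℝ F := fun y => (hF y).differentiableAt
  refine (convex_Iic μ).mul_sub_le_image_sub_of_le_deriv hFd.continuous.continuousOn
    hFd.differentiableOn (fun y hy => ?_) x hx μ self_mem_Iic hx
  rw [(hF y).deriv]
  exact hδ y (interior_subset hy : y ∈ Iic μ)

theorem apply_le_half_of_antitoneOn_div (hF : ∀ x, HasDerivAt F (f x) x) (hfpos : ∀ x, 0 < f x)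
    (hF01 : ∀ x, 0 < F x ∧ F x < 1) (hrefl : ∀ x, F x + F (2 * μ - x) = 2 * F μ)
    (hlc : AntitoneOn (fun x => f x / F x) (Iic μ)) :
    F μ ≤ 1 / 2 := by
  by_contra! hμ
  set δ := f μ / F μ * (2 * F μ - 1)
  have hδ : 0 < δ := mul_pos (div_pos (hfpos μ) (hF01 μ).1) (by linarith)
  have hbound : ∀ x ≤ μ, δ ≤ f x := fun x hx => by
    have hratio : f μ / F μ ≤ f x / F x := hlc hx self_mem_Iic hx
    have hFx : 2 * F μ - 1 ≤ F x := by linarith [hrefl x, (hF01 (2 * μ - x)).2]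
    calc δ ≤ f x / F x * F x :=
          mul_le_mul hratio hFx (by linarith) (div_pos (hfpos x) (hF01 x).1).le
      _ = f x := div_mul_cancel₀ _ (hF01 x).1.ne'
  have hgrowth := mul_sub_le_sub_of_le_hasDerivAt_Iic hF hbound
    (by linarith [inv_pos.2 hδ] : μ - δ⁻¹ ≤ μ)
  rw [sub_sub_cancel, mul_inv_cancel₀ hδ.ne'] at hgrowth
  linarith [(hF01 μ).2, (hF01 (μ - δ⁻¹)).1]

theorem mul_apply_neg_le_of_antitoneOn_div (hμ : 0 ≤ μ) (hfpos : ∀ x, 0 < f x)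
    (hF01 : ∀ x, 0 < F x ∧ F x < 1) (hFmono : Monotone F) (hsym : ∀ x, f x = f (2 * μ - x))
    (hrefl : ∀ x, F x + F (2 * μ - x) = 2 * F μ) (hFμ : F μ ≤ 1 / 2)
    (hlc : AntitoneOn (fun x => f x / F x) (Iic μ)) {τ : ℝ} (hτ : 0 ≤ τ) :
    f τ * F (-τ) ≤ f (-τ) * (1 - F τ) := by
  obtain ⟨s, hτs, hsμ, hfs, hFs⟩ : ∃ s, -τ ≤ s ∧ s ≤ μ ∧ f s = f τ ∧ F s ≤ 1 - F τ := by
    rcases le_total τ μ with h | h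
    · exact ⟨τ, by linarith, h, rfl, by linarith [hFmono h]⟩
    · exact ⟨2 * μ - τ, by linarith, by linarith, (hsym τ).symm, by linarith [hrefl τ]⟩
  have hratio : f s / F s ≤ f (-τ) / F (-τ) :=
    hlc (by simp only [mem_Iic]; linarith) hsμ hτs
  rw [div_le_div_iff₀ (hF01 s).1 (hF01 (-τ)).1, hfs] at hratio
  calc f τ * F (-τ) ≤ f (-τ) * F s := hratio
    _ ≤ f (-τ) * (1 - F τ) := mul_le_mul_of_nonneg_left hFs (hfpos _).le

end

theorem selacc_monotone_of_left_log_concave_general (f F : ℝ → ℝ) (μ : ℝ) (hμ : 0 ≤ μ)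
    (hF' : ∀ x, HasDerivAt F (f x) x) (hfpos : ∀ x, 0 < f x)
    (hF01 : ∀ x, 0 < F x ∧ F x < 1)
    (hsym : ∀ x, f x = f (2 * μ - x))
    (hlc : AntitoneOn (fun x => f x / F x) (Set.Iic μ)) :
    MonotoneOn (fun τ => (1 - F τ) / (1 - F τ + F (-τ))) (Set.Ici 0) := by
  show MonotoneOn (selectiveAccuracy F) (Ici 0)
  have hrefl := add_apply_two_mul_sub_eq hF' hsym
  have hFμ := apply_le_half_of_antitoneOn_div hF' hfpos hF01 hrefl hlc
  have hFmono := monotone_of_hasDerivAt_nonneg hF' fun x => (hfpos x).le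
  have hD : ∀ τ, 0 < 1 - F τ + F (-τ) := fun τ => by linarith [(hF01 τ).2, (hF01 (-τ)).1]
  have hA := fun τ => hasDerivAt_selectiveAccuracy hF' (hD τ).ne'
  refine monotoneOn_of_hasDerivWithinAt_nonneg (convex_Ici 0)
    (fun τ _ => (hA τ).continuousAt.continuousWithinAt) (fun τ _ => (hA τ).hasDerivWithinAt)
    fun τ hτ => div_nonneg ?_ (sq_nonneg _)
  rw [interior_Ici] at hτ
  linarith [mul_apply_neg_le_of_antitoneOn_div hμ hfpos hF01 hFmono hsym hrefl hFμ hlc hτ.le]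

/-- If `f` is symmetric about `μ ≥ 0`, `F` is log-concave on `(-∞, μ]` (i.e. `f/F`
nonincreasing there), and `A_F(0) ≥ 1/2`, then the selective accuracy
`A_F(τ) = (1 - F τ)/(1 - F τ + F (-τ))` is nondecreasing on `[0, ∞)`. -/
theorem selacc_monotone_of_left_log_concave (f F : ℝ → ℝ) (μ : ℝ) (hμ : 0 ≤ μ)
    (hF' : ∀ x, HasDerivAt F (f x) x) (hfpos : ∀ x, 0 < f x)
    (hF01 : ∀ x, 0 < F x ∧ F x < 1)
    (hsym : ∀ x, f x = f (2 * μ - x))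
    (hlc : AntitoneOn (fun x => f x / F x) (Set.Iic μ))
    (hA0 : (1 : ℝ) / 2 ≤ (1 - F 0) / (1 - F 0 + F 0)) :
    MonotoneOn (fun τ => (1 - F τ) / (1 - F τ + F (-τ))) (Set.Ici 0) :=
  selacc_monotone_of_left_log_concave_general f F μ hμ hF' hfpos hF01 hsym hlc
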